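/- For every T > 0 there exists a constant C > 0 (depending only on T) such that for all a ∈ ℝ with |a| ≤ 1, f_T(a) ≥ C, where f_T(a) = a·T − log(√(a²+1)) + log(cosh(log(√(a²+1)+a) − T·√(a²+1))). -/

import Mathlib

/-- `f T a = a·T − log(√(a²+1)) + log(cosh(log(√(a²+1)+a) − T·√(a²+1)))`. -/
noncomputable def optCost (T a : ℝ) : ℝ :=
  a * T - Real.log (Real.sqrt (a ^ 2 + 1)) +
    Real.log (Real.cosh (Real.log (Real.sqrt (a ^ 2 + 1) + a) - T * Real.sqrt (a ^ 2 + 1)))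

lemma convex_key (c t : ℝ) (hc : |c| < 1) (ht : 0 < t) :
    Real.exp (-(c * t)) < (1 - c) / 2 * Real.exp t + (1 + c) / 2 * Real.exp (-t) := by
  rw [abs_lt] at hc
  have h := strictConvexOn_exp.2 (Set.mem_univ t) (Set.mem_univ (-t))
    (by linarith) (show (0:ℝ) < (1 - c) / 2 by linarith)
    (show (0:ℝ) < (1 + c) / 2 by linarith) (by ring)
  simp only [smul_eq_mul] at h
  have harg : (1 - c) / 2 * t + (1 + c) / 2 * (-t) = -(c * t) := by ring
  rwa [harg] at h

lemma optCost_pos (T : ℝ) (hT : 0 < T) (a : ℝ) : 0 < optCost T a := by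
  set s := Real.sqrt (a ^ 2 + 1) with hs
  have hs0 : 0 ≤ s := Real.sqrt_nonneg _
  have hs1 : s ^ 2 = a ^ 2 + 1 := Real.sq_sqrt (by positivity)
  have hsa : |a| < s := by nlinarith [sq_abs a, abs_nonneg a]
  have hspos : 0 < s := lt_of_le_of_lt (abs_nonneg a) hsa
  have hsa1 : 0 < s + a := by have := neg_abs_le a; linarith
  have hsa2 : 0 < s - a := by have := le_abs_self a; linarith
  have hprod : (s + a) * (s - a) = 1 := by nlinarith
  set X := Real.log (s + a) - T * s with hX
  have hexpX : Real.exp X = (s + a) * Real.exp (-(T * s)) := by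
    rw [hX, Real.exp_sub, Real.exp_log hsa1, Real.exp_neg]
    field_simp
  have hexpnX : Real.exp (-X) = (s - a) * Real.exp (T * s) := by
    rw [hX, neg_sub, Real.exp_sub, Real.exp_log hsa1]
    rw [div_eq_iff (ne_of_gt hsa1)]
    nlinarith [Real.exp_pos (T * s)]
  have hcosh : Real.cosh X = ((s + a) * Real.exp (-(T * s)) + (s - a) * Real.exp (T * s)) / 2 := by
    rw [Real.cosh_eq, hexpX, hexpnX]
  -- key inequality
  have hc : |a / s| < 1 := by
    rw [abs_div, abs_of_pos hspos, div_lt_one hspos]; exact hsa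
  have ht : 0 < T * s := mul_pos hT hspos
  have hkey := convex_key (a / s) (T * s) hc ht
  have harg : a / s * (T * s) = a * T := by field_simp
  rw [harg] at hkey
  have hineq : s * Real.exp (-(a * T)) < Real.cosh X := by
    rw [hcosh]
    have := mul_lt_mul_of_pos_left hkey hspos
    have e1 : s * ((1 - a / s) / 2 * Real.exp (T * s) + (1 + a / s) / 2 * Real.exp (-(T * s)))
        = ((s + a) * Real.exp (-(T * s)) + (s - a) * Real.exp (T * s)) / 2 := by
      field_simp; ring
    linarith [e1 ▸ this]
  have hlog : Real.log s - a * T < Real.log (Real.cosh X) := by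
    have h1 : Real.log (s * Real.exp (-(a * T))) < Real.log (Real.cosh X) :=
      Real.log_lt_log (by positivity) hineq
    rwa [Real.log_mul (ne_of_gt hspos) (Real.exp_ne_zero _), Real.log_exp] at h1
  show 0 < a * T - Real.log s + Real.log (Real.cosh X)
  linarith

lemma optCost_continuous (T : ℝ) : Continuous (optCost T) := by
  have hs : Continuous fun a : ℝ => Real.sqrt (a ^ 2 + 1) :=
    Real.continuous_sqrt.comp (by continuity)
  have hspos : ∀ a : ℝ, 0 < Real.sqrt (a ^ 2 + 1) := fun a =>
    Real.sqrt_pos.2 (by positivity)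
  have hsa : ∀ a : ℝ, 0 < Real.sqrt (a ^ 2 + 1) + a := by
    intro a
    have h1 : Real.sqrt (a ^ 2 + 1) ^ 2 = a ^ 2 + 1 := Real.sq_sqrt (by positivity)
    nlinarith [sq_abs a, neg_abs_le a, Real.sqrt_nonneg (a ^ 2 + 1)]
  unfold optCost
  apply Continuous.add
  · exact (continuous_id.mul continuous_const).sub
      (hs.log fun a => ne_of_gt (hspos a))
  · apply Continuous.log
    · exact Real.continuous_cosh.comp
        (((hs.add continuous_id).log fun a => ne_of_gt (hsa a)).sub
          (continuous_const.mul hs))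
    · intro a
      exact ne_of_gt (Real.cosh_pos _)

/-- For every `T > 0` there is `C > 0` with `f_T(a) ≥ C` whenever `|a| ≤ 1`. -/
theorem optCost_lower_bound_bdd (T : ℝ) (hT : 0 < T) :
    ∃ C > 0, ∀ a : ℝ, |a| ≤ 1 → C ≤ optCost T a := by
  obtain ⟨a₀, ha₀, hmin⟩ := (isCompact_Icc (a := (-1:ℝ)) (b := 1)).exists_isMinOn
    ⟨0, by norm_num⟩ (optCost_continuous T).continuousOn
  exact ⟨optCost T a₀, optCost_pos T hT a₀, fun a ha => hmin (abs_le.1 ha)⟩
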